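/- Let m ≥ 2 be an integer with m ≡ 6 (mod 10), let f(x) = x^m on ℤ_5, and let t = ν_5(m − 1). For each integer l ≥ 0, each i ∈ {1, 2, 3, 4}, and each a ∈ {0, 1, …, 5^(t−1) − 1}, set M_{l,a,i} = 1 + 5^(l+1)·i + 5^(l+2)·a + 5^(t+l+1)ℤ_5. Then the sets M_{l,a,i} are pairwise disjoint clopen subsets of ℤ_5, each M_{l,a,i} is a minimal component of f (f(M_{l,a,i}) ⊆ M_{l,a,i} and every forward orbit of f in M_{l,a,i} is dense in M_{l,a,i}), the union of all the M_{l,a,i} together with {1} equals the ball 1 + 5ℤ_5, and moreover for every 5-adic unit x (i.e., x ∉ 5ℤ_5) the second iterate satisfies x^(m²) ∈ 1 + 5ℤ_5. -/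

import Mathlib

/-!
For an odd prime `p` and `m ≡ 1 (mod p)` with `t = v_p(m - 1)`, lifting the exponent gives
`v_p(x ^ m ^ (n + j) - x ^ m ^ n) = v_p(x - 1) + t + v_p(j)` whenever `x ≡ 1 (mod p)`.
So if `v_p(x - 1) = e`, the points `x ^ m ^ n`, `n < p ^ r`, lie in the ball `x + p ^ (t + e) ℤ_p`
and are pairwise incongruent modulo `p ^ (t + e + r)`. That ball meets exactly `p ^ r` residue
classes modulo `p ^ (t + e + r)`, so the orbit meets all of them: the ball is a minimal component.
The sets `M_{l,a,i}` are exactly these balls for `e = l + 1`, indexed by the last `t` base-`p`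
digits `i, a` of the unit `(x - 1) / p ^ (l + 1)`. The last claim is Fermat's little theorem,
as `4 ∣ m ^ 2`.
-/

open Filter Topology

instance : Fact (Nat.Prime 5) := ⟨by norm_num⟩

theorem Nat.not_dvd_add_mul_of_pos_of_lt {p i a : ℕ} (hi : 0 < i) (hip : i < p) :
    ¬p ∣ i + p * a := fun h =>
  (Nat.le_of_dvd hi ((Nat.dvd_add_left (dvd_mul_right p a)).1 h)).not_gt hip

theorem Nat.add_mul_lt_pow {p t i a : ℕ} (ht : t ≠ 0) (hip : i < p) (ha : a < p ^ (t - 1)) :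
    i + p * a < p ^ t :=
  calc i + p * a < p * (a + 1) := by linarith
    _ ≤ p * p ^ (t - 1) := Nat.mul_le_mul_left p ha
    _ = p ^ t := mul_pow_sub_one ht p

theorem emultiplicity_eq_of_pow_dvd_sub {R : Type*} [Ring R] {a b c : R} {K : ℕ}
    (hb : emultiplicity a b < K) (h : a ^ K ∣ c - b) : emultiplicity a c = emultiplicity a b := by
  have := emultiplicity_add_of_gt (hb.trans_le (le_emultiplicity_of_pow_dvd h))
  rwa [sub_add_cancel] at this

namespace PadicInt

variable {p : ℕ} [hp : Fact p.Prime]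

theorem toZModPow_eq_iff {k : ℕ} {x y : ℤ_[p]} :
    toZModPow k x = toZModPow k y ↔ (p : ℤ_[p]) ^ k ∣ x - y := by
  rw [← sub_eq_zero, ← map_sub, ← RingHom.mem_ker, ker_toZModPow, Ideal.mem_span_singleton]

theorem pow_dvd_natCast_iff {k n : ℕ} : (p : ℤ_[p]) ^ k ∣ (n : ℤ_[p]) ↔ p ^ k ∣ n := by
  rw [← sub_zero (n : ℤ_[p]), ← toZModPow_eq_iff, map_natCast, map_zero, ZMod.natCast_eq_zero_iff]

theorem emultiplicity_natCast (n : ℕ) : emultiplicity (p : ℤ_[p]) n = emultiplicity p n :=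
  emultiplicity_eq_emultiplicity_iff.2 fun _ => pow_dvd_natCast_iff

theorem emultiplicity_pow_mul_natCast (e : ℕ) {n : ℕ} (hn : ¬p ∣ n) :
    emultiplicity (p : ℤ_[p]) (p ^ e * n) = e := by
  rw [emultiplicity_mul prime_p, emultiplicity_pow_self_of_prime prime_p, emultiplicity_natCast,
    emultiplicity_eq_zero.2 hn, add_zero]

theorem not_dvd_of_dvd_sub_one {x : ℤ_[p]} (hx : (p : ℤ_[p]) ∣ x - 1) : ¬(p : ℤ_[p]) ∣ x :=
  fun h => prime_p.not_dvd_one (by simpa using dvd_sub h hx)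

theorem emultiplicity_pow_sub_one (hp_odd : Odd p) {x : ℤ_[p]} (hx : (p : ℤ_[p]) ∣ x - 1)
    (n : ℕ) :
    emultiplicity (p : ℤ_[p]) (x ^ n - 1) =
      emultiplicity (p : ℤ_[p]) (x - 1) + emultiplicity p n := by
  rcases eq_or_ne n 0 with rfl | hn
  · simp
  obtain ⟨k, q, hq, rfl⟩ := Nat.exists_eq_pow_mul_and_not_dvd hn p hp.out.ne_one
  have hxk : (p : ℤ_[p]) ∣ x ^ p ^ k - 1 ^ p ^ k := dvd_trans hx (sub_dvd_pow_sub_pow x 1 _)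
  have h1 : x ^ (p ^ k * q) - 1 = (x ^ p ^ k) ^ q - (1 ^ p ^ k) ^ q := by simp [pow_mul]
  rw [h1, emultiplicity_pow_sub_pow_of_prime prime_p hxk
      (fun h => not_dvd_of_dvd_sub_one hx (prime_p.dvd_of_dvd_pow h))
      (by rwa [← pow_one (p : ℤ_[p]), pow_dvd_natCast_iff, pow_one]),
    emultiplicity_pow_prime_pow_sub_pow_prime_pow prime_p hp_odd hx
      (not_dvd_of_dvd_sub_one hx), hp.out.emultiplicity_mul, hp.out.emultiplicity_pow_self,
    emultiplicity_eq_zero.2 hq, add_zero]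

theorem pow_dvd_iff_norm_le {K : ℕ} {z : ℤ_[p]} : (p : ℤ_[p]) ^ K ∣ z ↔ ‖z‖ ≤ p ^ (-K : ℤ) := by
  rw [norm_le_pow_iff_mem_span_pow, Ideal.mem_span_singleton]

theorem isClopen_setOf_pow_dvd_sub (K : ℕ) (c : ℤ_[p]) :
    IsClopen {x : ℤ_[p] | (p : ℤ_[p]) ^ K ∣ x - c} := by
  have h : {x : ℤ_[p] | (p : ℤ_[p]) ^ K ∣ x - c} = Metric.closedBall c (p ^ (-K : ℤ)) := by
    ext x
    rw [Set.mem_ofPred_eq, pow_dvd_iff_norm_le, Metric.mem_closedBall, dist_eq_norm]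
  rw [h]
  exact IsUltrametricDist.isClopen_closedBall c (zpow_ne_zero _ (by exact_mod_cast hp.out.ne_zero))

theorem mem_closure_of_forall_pow_dvd_sub {s : Set ℤ_[p]} {y : ℤ_[p]}
    (h : ∀ k : ℕ, ∃ x ∈ s, (p : ℤ_[p]) ^ k ∣ x - y) : y ∈ closure s := by
  refine Metric.mem_closure_iff.2 fun ε hε => ?_
  obtain ⟨k, hk⟩ := exists_pow_neg_lt p hε
  obtain ⟨x, hx, hxy⟩ := h k
  refine ⟨x, hx, ?_⟩
  rw [dist_comm, dist_eq_norm]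
  exact (pow_dvd_iff_norm_le.1 hxy).trans_lt hk

theorem exists_pow_dvd_sub_of_injective {K r : ℕ} {c : ℤ_[p]} (f : Fin (p ^ r) → ℤ_[p])
    (hf : ∀ n, (p : ℤ_[p]) ^ K ∣ f n - c)
    (hinj : ∀ n n', (p : ℤ_[p]) ^ (K + r) ∣ f n - f n' → n = n')
    {y : ℤ_[p]} (hy : (p : ℤ_[p]) ^ K ∣ y - c) : ∃ n, (p : ℤ_[p]) ^ (K + r) ∣ f n - y := by
  choose d hd using hf
  obtain ⟨e, he⟩ := hy
  have hsub : ∀ n (z : ℤ_[p]), f n - (c + p ^ K * z) = p ^ K * (d n - z) := fun n z => by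
    rw [mul_sub, ← hd]; ring
  have hinj' : Function.Injective fun n => toZModPow r (d n) := fun n n' h => by
    refine hinj n n' ?_
    rw [show f n' = c + p ^ K * d n' by rw [← hd]; ring, hsub, pow_add]
    exact mul_dvd_mul_left _ (toZModPow_eq_iff.1 h)
  obtain ⟨n, hn⟩ := ((Fintype.bijective_iff_injective_and_card _).2 ⟨hinj', by simp⟩).2
    (toZModPow r e)
  refine ⟨n, ?_⟩
  rw [show y = c + p ^ K * e by rw [← he]; ring, hsub, pow_add]
  exact mul_dvd_mul_left _ (toZModPow_eq_iff.1 hn)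

section Dynamics

variable {m : ℕ}

theorem emultiplicity_pow_pow_add_sub_pow_pow (hp_odd : Odd p) (hm : m % p = 1) {x : ℤ_[p]}
    (hx : (p : ℤ_[p]) ∣ x - 1) (n j : ℕ) :
    emultiplicity (p : ℤ_[p]) (x ^ m ^ (n + j) - x ^ m ^ n) =
      emultiplicity (p : ℤ_[p]) (x - 1) + emultiplicity p (m - 1) + emultiplicity p j := by
  have hpm : ¬p ∣ m := by
    rw [Nat.dvd_iff_mod_eq_zero, hm]; exact one_ne_zero
  have hpm1 : p ∣ m - 1 := hm ▸ Nat.dvd_sub_mod m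
  have hmn : m ^ (n + j) = m ^ n + m ^ n * (m ^ j - 1) := by
    have hm0 : 0 < m := Nat.pos_of_ne_zero (by rintro rfl; simp at hm)
    rw [pow_add, Nat.mul_sub_one, Nat.add_sub_cancel' (Nat.le_mul_of_pos_right _ (pow_pos hm0 j))]
  have hmj : emultiplicity p (m ^ j - 1) = emultiplicity p (m - 1) + emultiplicity p j := by
    simpa using Nat.emultiplicity_pow_sub_pow hp.out hp_odd hpm1 hpm (y := 1) j
  have hsplit : x ^ m ^ (n + j) - x ^ m ^ n = x ^ m ^ n * (x ^ (m ^ n * (m ^ j - 1)) - 1) := by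
    rw [hmn, pow_add]; ring
  rw [hsplit, emultiplicity_mul prime_p, emultiplicity_eq_zero.2 fun h =>
      not_dvd_of_dvd_sub_one hx (prime_p.dvd_of_dvd_pow h), zero_add,
    emultiplicity_pow_sub_one hp_odd hx, hp.out.emultiplicity_mul,
    emultiplicity_eq_zero.2 fun h => hpm (hp.out.dvd_of_dvd_pow h), zero_add, hmj, add_assoc]

theorem pow_dvd_pow_pow_add_sub_pow_pow_iff (hp_odd : Odd p) (hm : m % p = 1) (hm1 : 1 < m)
    {x : ℤ_[p]} {e : ℕ} (hx : emultiplicity (p : ℤ_[p]) (x - 1) = e) (he : e ≠ 0) (n j r : ℕ) :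
    (p : ℤ_[p]) ^ (padicValNat p (m - 1) + e + r) ∣ x ^ m ^ (n + j) - x ^ m ^ n ↔ p ^ r ∣ j := by
  have hx1 : (p : ℤ_[p]) ∣ x - 1 :=
    dvd_of_emultiplicity_pos (hx ▸ by exact_mod_cast Nat.pos_of_ne_zero he)
  rw [pow_dvd_iff_le_emultiplicity, emultiplicity_pow_pow_add_sub_pow_pow hp_odd hm hx1, hx,
    ← padicValNat_eq_emultiplicity (by omega), pow_dvd_iff_le_emultiplicity, Nat.cast_add,
    Nat.cast_add, add_comm (e : ℕ∞), ENat.add_le_add_iff_left (by simp)]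

theorem exists_pow_dvd_pow_pow_sub (hp_odd : Odd p) (hm : m % p = 1) (hm1 : 1 < m)
    {x y : ℤ_[p]} {e : ℕ} (hx : emultiplicity (p : ℤ_[p]) (x - 1) = e) (he : e ≠ 0)
    (hy : (p : ℤ_[p]) ^ (padicValNat p (m - 1) + e) ∣ y - x) (k : ℕ) :
    ∃ n : ℕ, (p : ℤ_[p]) ^ k ∣ x ^ m ^ n - y := by
  have hsep := pow_dvd_pow_pow_add_sub_pow_pow_iff hp_odd hm hm1 hx he
  have hmem (n : Fin (p ^ k)) :
      (p : ℤ_[p]) ^ (padicValNat p (m - 1) + e) ∣ x ^ m ^ (n : ℕ) - x := by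
    simpa using (hsep 0 n 0).2 (one_dvd _)
  have hinj : ∀ n n' : Fin (p ^ k), (p : ℤ_[p]) ^ (padicValNat p (m - 1) + e + k) ∣
      x ^ m ^ (n : ℕ) - x ^ m ^ (n' : ℕ) → n = n' := by
    intro n n' h
    wlog hle : n' ≤ n generalizing n n'
    · exact (this n' n (by rw [dvd_sub_comm]; exact h) (le_of_not_ge hle)).symm
    obtain ⟨j, hj⟩ := Nat.exists_eq_add_of_le (Fin.le_def.1 hle)
    rw [hj, hsep] at h
    have hj0 : j = 0 := Nat.eq_zero_of_dvd_of_lt h (by omega)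
    exact Fin.ext (by omega)
  obtain ⟨n, hn⟩ := exists_pow_dvd_sub_of_injective _ hmem hinj hy
  exact ⟨n, (pow_dvd_pow _ (Nat.le_add_left k _)).trans hn⟩

end Dynamics

theorem emultiplicity_eq_of_pow_dvd_sub_pow_mul_natCast {t e n : ℕ} {z : ℤ_[p]} (ht : t ≠ 0)
    (hn : ¬p ∣ n) (h : (p : ℤ_[p]) ^ (t + e) ∣ z - p ^ e * n) :
    emultiplicity (p : ℤ_[p]) z = e := by
  have hlead := emultiplicity_pow_mul_natCast (p := p) e hn
  rw [emultiplicity_eq_of_pow_dvd_sub (by rw [hlead]; exact_mod_cast (by omega : e < t + e)) h,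
    hlead]

theorem eq_of_pow_dvd_sub_pow_mul_natCast {t l l' n n' : ℕ} {z : ℤ_[p]} (ht : t ≠ 0)
    (hn : ¬p ∣ n) (hn' : ¬p ∣ n') (hnt : n < p ^ t) (hnt' : n' < p ^ t)
    (h : (p : ℤ_[p]) ^ (t + l + 1) ∣ z - p ^ (l + 1) * n)
    (h' : (p : ℤ_[p]) ^ (t + l' + 1) ∣ z - p ^ (l' + 1) * n') : l = l' ∧ n = n' := by
  have hl : ((l + 1 : ℕ) : ℕ∞) = (l' + 1 : ℕ) := by
    rw [← emultiplicity_eq_of_pow_dvd_sub_pow_mul_natCast ht hn h,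
      ← emultiplicity_eq_of_pow_dvd_sub_pow_mul_natCast ht hn' h']
  obtain rfl : l = l' := by have := ENat.natCast_inj.1 hl; omega
  refine ⟨rfl, ?_⟩
  have hdiff : (p : ℤ_[p]) ^ (l + 1) * p ^ t ∣ p ^ (l + 1) * (n' - n) := by
    rw [← pow_add, add_comm, ← add_assoc]
    convert dvd_sub h h' using 1
    ring
  rw [mul_dvd_mul_iff_left (pow_ne_zero _ prime_p.ne_zero), ← toZModPow_eq_iff, map_natCast,
    map_natCast, ZMod.natCast_eq_natCast_iff', Nat.mod_eq_of_lt hnt, Nat.mod_eq_of_lt hnt'] at hdiff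
  exact hdiff.symm

theorem exists_pow_dvd_sub_pow_mul_natCast {t : ℕ} (ht : t ≠ 0) {z : ℤ_[p]} (hz : z ≠ 0)
    (hpz : (p : ℤ_[p]) ∣ z) :
    ∃ l n : ℕ, n < p ^ t ∧ ¬p ∣ n ∧ (p : ℤ_[p]) ^ (t + l + 1) ∣ z - p ^ (l + 1) * n := by
  have hzu := unitCoeff_spec hz
  set u : ℤ_[p] := (unitCoeff hz : ℤ_[p])
  set v := z.valuation
  have hu : ¬(p : ℤ_[p]) ∣ u := fun h =>
    prime_p.not_isUnit (isUnit_of_dvd_unit h (unitCoeff hz).isUnit)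
  have hv : 1 ≤ v := by
    refine Nat.one_le_iff_ne_zero.2 fun hv => hu ?_
    rwa [hzu, hv, pow_zero, mul_one] at hpz
  set n := (toZModPow t u).val
  have hun : (p : ℤ_[p]) ^ t ∣ u - n := by
    rw [← toZModPow_eq_iff, map_natCast, ZMod.natCast_zmod_val]
  refine ⟨v - 1, n, ZMod.val_lt _, fun h => hu ?_, ?_⟩
  · simpa using dvd_add ((dvd_pow_self _ ht).trans hun) (Nat.cast_dvd_cast h)
  · rw [add_assoc, Nat.sub_add_cancel hv, hzu, add_comm, pow_add,
      show u * (p : ℤ_[p]) ^ v - p ^ v * n = p ^ v * (u - n) by ring]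
    exact mul_dvd_mul_left _ hun

theorem dvd_pow_sub_one_of_not_dvd {x : ℤ_[p]} (hx : ¬(p : ℤ_[p]) ∣ x) {N : ℕ} (hN : p - 1 ∣ N) :
    (p : ℤ_[p]) ∣ x ^ N - 1 := by
  have hker (z : ℤ_[p]) : toZMod z = 0 ↔ (p : ℤ_[p]) ∣ z := by
    rw [← RingHom.mem_ker, ker_toZMod, maximalIdeal_eq_span_p, Ideal.mem_span_singleton]
  obtain ⟨k, rfl⟩ := hN
  rw [← hker, map_sub, map_pow, map_one, pow_mul,
    ZMod.pow_card_sub_one_eq_one ((hker x).not.2 hx), one_pow, sub_self]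

theorem padicValNat_sub_one_ne_zero {m : ℕ} (hm : m % p = 1) (hm1 : 1 < m) :
    padicValNat p (m - 1) ≠ 0 :=
  Nat.one_le_iff_ne_zero.1 (one_le_padicValNat_of_dvd (by omega) (hm ▸ Nat.dvd_sub_mod m))

def digitBall (p : ℕ) [Fact p.Prime] (t l a i : ℕ) : Set ℤ_[p] :=
  {x | (p : ℤ_[p]) ^ (t + l + 1) ∣ x - (1 + p ^ (l + 1) * (i : ℤ_[p]) + p ^ (l + 2) * (a : ℤ_[p]))}

section DigitBall

variable {t l a i : ℕ}

theorem mem_digitBall_iff {x : ℤ_[p]} :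
    x ∈ digitBall p t l a i ↔
      (p : ℤ_[p]) ^ (t + l + 1) ∣ x - 1 - p ^ (l + 1) * ((i + p * a : ℕ) : ℤ_[p]) := by
  rw [digitBall, Set.mem_ofPred_eq, show x - 1 - (p : ℤ_[p]) ^ (l + 1) * ((i + p * a : ℕ) : ℤ_[p]) =
    x - (1 + p ^ (l + 1) * (i : ℤ_[p]) + p ^ (l + 2) * (a : ℤ_[p])) by push_cast; ring]

theorem emultiplicity_sub_one_of_mem_digitBall (ht : t ≠ 0) (hi : 0 < i) (hip : i < p)
    {x : ℤ_[p]} (hx : x ∈ digitBall p t l a i) : emultiplicity (p : ℤ_[p]) (x - 1) = l + 1 := by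
  exact_mod_cast emultiplicity_eq_of_pow_dvd_sub_pow_mul_natCast ht
    (Nat.not_dvd_add_mul_of_pos_of_lt hi hip) (mem_digitBall_iff.1 hx)

theorem isClopen_digitBall : IsClopen (digitBall p t l a i) :=
  isClopen_setOf_pow_dvd_sub _ _

theorem disjoint_digitBall {l' a' i' : ℕ} (ht : t ≠ 0) (ha : a < p ^ (t - 1))
    (ha' : a' < p ^ (t - 1)) (hi : 0 < i) (hip : i < p) (hi' : 0 < i') (hip' : i' < p)
    (hne : (l, a, i) ≠ (l', a', i')) : Disjoint (digitBall p t l a i) (digitBall p t l' a' i') := by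
  refine Set.disjoint_left.2 fun x hx hx' => hne ?_
  obtain ⟨rfl, hn⟩ := eq_of_pow_dvd_sub_pow_mul_natCast ht
    (Nat.not_dvd_add_mul_of_pos_of_lt hi hip) (Nat.not_dvd_add_mul_of_pos_of_lt hi' hip')
    (Nat.add_mul_lt_pow ht hip ha) (Nat.add_mul_lt_pow ht hip' ha')
    (mem_digitBall_iff.1 hx) (mem_digitBall_iff.1 hx')
  have hi_eq : i = i' := by
    simpa [Nat.mod_eq_of_lt hip, Nat.mod_eq_of_lt hip'] using congrArg (· % p) hn
  subst hi_eq
  obtain rfl : a = a' := Nat.eq_of_mul_eq_mul_left (hi.trans hip) (Nat.add_left_cancel hn)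
  rfl

theorem iUnion_digitBall_union_one (ht : t ≠ 0) :
    (⋃ l : ℕ, ⋃ a ∈ Finset.range (p ^ (t - 1)), ⋃ i ∈ Finset.Icc 1 (p - 1), digitBall p t l a i)
      ∪ {1} = {x : ℤ_[p] | (p : ℤ_[p]) ∣ x - 1} := by
  ext x
  simp only [Set.mem_union, Set.mem_iUnion, Finset.mem_range, Finset.mem_Icc, exists_prop,
    Set.mem_singleton_iff]
  constructor
  · rintro (⟨l, a, -, i, ⟨hi, hip⟩, hx⟩ | rfl)
    · refine dvd_of_emultiplicity_pos ?_
      rw [emultiplicity_sub_one_of_mem_digitBall ht hi (by omega) hx]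
      exact_mod_cast l.succ_pos
    · simp
  · intro hx
    by_cases hx1 : x = 1
    · exact Or.inr hx1
    obtain ⟨l, n, hnt, hpn, hn⟩ := exists_pow_dvd_sub_pow_mul_natCast ht (sub_ne_zero.2 hx1) hx
    refine Or.inl ⟨l, n / p, ?_, n % p, ⟨?_, ?_⟩, ?_⟩
    · exact Nat.div_lt_of_lt_mul (by rwa [mul_pow_sub_one ht])
    · exact Nat.pos_of_ne_zero fun h => hpn (Nat.dvd_of_mod_eq_zero h)
    · exact Nat.le_sub_one_of_lt (Nat.mod_lt _ hp.out.pos)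
    · rwa [mem_digitBall_iff, Nat.mod_add_div]

variable {m : ℕ} (hp_odd : Odd p) (hm : m % p = 1) (hm1 : 1 < m) (hi : 0 < i) (hip : i < p)
include hp_odd hm hm1 hi hip

theorem pow_mem_digitBall {x : ℤ_[p]} (hx : x ∈ digitBall p (padicValNat p (m - 1)) l a i) :
    x ^ m ∈ digitBall p (padicValNat p (m - 1)) l a i := by
  have hx1 := emultiplicity_sub_one_of_mem_digitBall (padicValNat_sub_one_ne_zero hm hm1) hi hip hx
  have hxm := (pow_dvd_pow_pow_add_sub_pow_pow_iff hp_odd hm hm1 hx1 l.succ_ne_zero 0 1 0).2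
    (one_dvd _)
  simp only [zero_add, pow_one, pow_zero, add_zero] at hxm
  have hsum := dvd_add hxm hx
  rwa [sub_add_sub_cancel] at hsum

theorem digitBall_subset_closure_orbit {x : ℤ_[p]}
    (hx : x ∈ digitBall p (padicValNat p (m - 1)) l a i) :
    digitBall p (padicValNat p (m - 1)) l a i ⊆ closure (Set.range fun n : ℕ => x ^ m ^ n) := by
  have hx1 := emultiplicity_sub_one_of_mem_digitBall (padicValNat_sub_one_ne_zero hm hm1) hi hip hx
  intro y hy
  refine mem_closure_of_forall_pow_dvd_sub fun k => ?_
  obtain ⟨n, hn⟩ := exists_pow_dvd_pow_pow_sub hp_odd hm hm1 hx1 l.succ_ne_zero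
    (by have hyx := dvd_sub hy hx; rwa [sub_sub_sub_cancel_right] at hyx) k
  exact ⟨_, ⟨n, rfl⟩, hn⟩

end DigitBall

end PadicInt

/-- Minimal decomposition for `x ↦ x^m` on `ℤ_5` with `m ≡ 6 (mod 10)`:
the sets `M_{l,a,i} = 1 + 5^(l+1)i + 5^(l+2)a + 5^(t+l+1)ℤ_5` are pairwise disjoint
clopen minimal components, together with `{1}` they cover exactly the ball `1 + 5ℤ_5`,
and for every 5-adic unit `x` the second iterate `x^(m²)` lies in `1 + 5ℤ_5`. -/
theorem monomial_Z5_six_mod_ten_decomposition (m : ℕ) (hm : 2 ≤ m) (hmod : m % 10 = 6)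
    (t : ℕ) (ht : t = padicValNat 5 (m - 1))
    (M : ℕ → ℕ → ℕ → Set ℤ_[5])
    (hM : ∀ l a i, M l a i =
      {x : ℤ_[5] | (5 : ℤ_[5]) ^ (t + l + 1) ∣
        x - (1 + 5 ^ (l + 1) * (i : ℤ_[5]) + 5 ^ (l + 2) * (a : ℤ_[5]))}) :
    (∀ l a i l' a' i',
      a < 5 ^ (t - 1) → a' < 5 ^ (t - 1) → 1 ≤ i → i ≤ 4 → 1 ≤ i' → i' ≤ 4 →
      (l, a, i) ≠ (l', a', i') → Disjoint (M l a i) (M l' a' i')) ∧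
    (∀ l a i, a < 5 ^ (t - 1) → 1 ≤ i → i ≤ 4 →
      IsClopen (M l a i) ∧
      (∀ x ∈ M l a i, x ^ m ∈ M l a i) ∧
      (∀ x ∈ M l a i, M l a i ⊆ closure (Set.range fun n : ℕ => x ^ m ^ n))) ∧
    ((⋃ l : ℕ, ⋃ a ∈ Finset.range (5 ^ (t - 1)), ⋃ i ∈ Finset.Icc 1 4, M l a i)
        ∪ {1} = {x : ℤ_[5] | (5 : ℤ_[5]) ∣ x - 1}) ∧
    (∀ x : ℤ_[5], ¬ (5 : ℤ_[5]) ∣ x → (5 : ℤ_[5]) ∣ x ^ m ^ 2 - 1) := by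
  obtain rfl : M = PadicInt.digitBall 5 t := funext₃ fun l a i => hM l a i
  have hm5 : m % 5 = 1 := by omega
  have h5 : Odd 5 := by decide
  subst ht
  have ht0 := PadicInt.padicValNat_sub_one_ne_zero hm5 hm
  refine ⟨fun l a i l' a' i' ha ha' hi hi4 hi' hi4' hne =>
      PadicInt.disjoint_digitBall ht0 ha ha' hi (by omega) hi' (by omega) hne,
    fun l a i _ hi hi4 => ⟨PadicInt.isClopen_digitBall,
      fun x hx => PadicInt.pow_mem_digitBall h5 hm5 hm hi (by omega) hx,
      fun x hx => PadicInt.digitBall_subset_closure_orbit h5 hm5 hm hi (by omega) hx⟩,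
    PadicInt.iUnion_digitBall_union_one ht0,
    fun x hx => PadicInt.dvd_pow_sub_one_of_not_dvd hx (pow_dvd_pow_of_dvd (by omega : 2 ∣ m) 2)⟩
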